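/- Let s be a continuous strictly proper accuracy scoring rule on 𝒞 all of whose scores are finite, let α ∈ [-∞, M] satisfy α ≤ s(p)(ω) for all p ∈ 𝒫 and ω ∈ Ω, and define s_α by: s_α(c) = s(c) if c ∉ 𝒫 or c ∈ ℛ; and for p ∈ 𝒫 \ ℛ, s_α(p)(ω) = s(p)(ω) if p({ω}) > 0 and s_α(p)(ω) = α if p({ω}) = 0. Then for every quasi-strictly proper scoring rule s_α' : 𝒞 → [-∞,M]^Ω that agrees with s_α on 𝒫, and every c ∈ 𝒞 \ 𝒫, there exists p ∈ 𝒫 (indeed p ∈ ℛ) such that s_α(p) strictly dominates s_α'(c). -/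

import Mathlib

open Filter Topology

variable {Ω : Type*}

/-- A probability function: nonnegative, finitely additive, total mass one. -/
def IsProbability [Fintype Ω] (p : Set Ω → ℝ) : Prop :=
  (∀ A, 0 ≤ p A) ∧ (∀ A B : Set Ω, Disjoint A B → p (A ∪ B) = p A + p B) ∧ p Set.univ = 1

/-- Expected value `E_p f = Σ_{ω, p({ω}) ≠ 0} p({ω}) f(ω)`.  Since `EReal`
multiplication satisfies `0 * a = a * 0 = 0` even for infinite `a`, the zero terms
contribute nothing and we may sum over all of `Ω`. -/
noncomputable def expScore [Fintype Ω] (p : Set Ω → ℝ) (f : Ω → EReal) : EReal :=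
  ∑ ω, (p {ω} : EReal) * f ω

/-- A score is finite when all of its values are finite. -/
def FiniteScore (f : Ω → EReal) : Prop := ∀ ω, f ω ≠ ⊥ ∧ f ω ≠ ⊤


noncomputable def Pfun [Fintype Ω] (w : Ω → ℝ) : Set Ω → ℝ := fun A => ∑ ω, A.indicator w ω

lemma Pfun_singleton [Fintype Ω] (w : Ω → ℝ) (ω : Ω) : Pfun w {ω} = w ω := by
  unfold Pfun
  rw [Finset.sum_eq_single_of_mem ω (Finset.mem_univ ω)]
  · exact Set.indicator_of_mem rfl w
  · intro b _ hb
    exact Set.indicator_of_notMem (by simp [hb]) w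

lemma isProbability_Pfun [Fintype Ω] {w : Ω → ℝ} (hw : w ∈ stdSimplex ℝ Ω) :
    IsProbability (Pfun w) := by
  refine ⟨fun A => Finset.sum_nonneg fun ω _ => Set.indicator_nonneg (fun a _ => hw.1 a) ω,
    fun A B hAB => ?_, ?_⟩
  · unfold Pfun
    rw [← Finset.sum_add_distrib]
    refine Finset.sum_congr rfl fun ω _ => ?_
    rw [Set.indicator_union_of_disjoint hAB]
  · unfold Pfun
    simpa [Set.indicator_univ] using hw.2

lemma continuous_Pfun [Fintype Ω] : Continuous (Pfun (Ω := Ω)) := by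
  refine continuous_pi fun A => ?_
  refine continuous_finset_sum _ fun ω _ => ?_
  by_cases h : ω ∈ A
  · have : (fun a : Ω → ℝ => A.indicator a ω) = fun a => a ω :=
      funext fun a => Set.indicator_of_mem h a
    rw [this]; exact continuous_apply ω
  · have : (fun a : Ω → ℝ => A.indicator a ω) = fun _ => (0:ℝ) :=
      funext fun a => Set.indicator_of_notMem h a
    rw [this]; exact continuous_const

lemma expScore_Pfun [Fintype Ω] (w : Ω → ℝ) (f : Ω → EReal) :
    expScore (Pfun w) f = ∑ ω, (w ω : EReal) * f ω := by
  unfold expScore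
  exact Finset.sum_congr rfl fun ω _ => by rw [Pfun_singleton]

lemma ereal_coe_sum {ι : Type*} (t : Finset ι) (f : ι → ℝ) :
    ((∑ i ∈ t, f i : ℝ) : EReal) = ∑ i ∈ t, (f i : EReal) := by
  induction t using Finset.cons_induction with
  | empty => simp
  | cons a t ha ih => rw [Finset.sum_cons, Finset.sum_cons, EReal.coe_add, ih]

lemma uniform_mem_stdSimplex (Ω : Type*) [Fintype Ω] [Nonempty Ω] :
    (fun _ : Ω => (Fintype.card Ω : ℝ)⁻¹) ∈ stdSimplex ℝ Ω := by
  constructor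
  · intro x
    positivity
  · rw [Finset.sum_const, Finset.card_univ, nsmul_eq_mul]
    have : (Fintype.card Ω : ℝ) ≠ 0 := Nat.cast_ne_zero.2 Fintype.card_ne_zero
    field_simp


/-- Core lemma: if `S` is a continuous proper "score" on the simplex and `b` has
`E_w b < E_w (S w)` for all `w` in the simplex, then some interior point of the
simplex strictly pointwise-dominates `b`. -/
theorem key_dom {Ω : Type*} [Fintype Ω] [Nonempty Ω]
    (S : (Ω → ℝ) → Ω → ℝ)
    (hScont : ∀ ω, Continuous fun w => S w ω)
    (hprop : ∀ w v, w ∈ stdSimplex ℝ Ω → v ∈ stdSimplex ℝ Ω →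
       ∑ ω, w ω * S v ω ≤ ∑ ω, w ω * S w ω)
    (b : Ω → ℝ)
    (hb : ∀ w ∈ stdSimplex ℝ Ω, ∑ ω, w ω * b ω < ∑ ω, w ω * S w ω) :
    ∃ w ∈ stdSimplex ℝ Ω, (∀ ω, 0 < w ω) ∧ ∀ ω, b ω < S w ω := by
  classical
  set Δ := stdSimplex ℝ Ω with hΔ
  have hΔc : IsCompact Δ := isCompact_stdSimplex ℝ Ω
  have hunif : (fun _ : Ω => (Fintype.card Ω : ℝ)⁻¹) ∈ Δ := uniform_mem_stdSimplex Ω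
  have hVcont : Continuous fun w : Ω → ℝ => ∑ ω, w ω * S w ω :=
    continuous_finset_sum _ fun ω _ => (continuous_apply ω).mul (hScont ω)
  have hGcont : Continuous fun w : Ω → ℝ => (∑ ω, w ω * S w ω) - ∑ ω, w ω * b ω :=
    hVcont.sub (continuous_finset_sum _ fun ω _ => (continuous_apply ω).mul continuous_const)
  obtain ⟨p, hpΔ, hpmin⟩ := hΔc.exists_isMinOn ⟨_, hunif⟩ hGcont.continuousOn
  set ε := (∑ ω, p ω * S p ω) - ∑ ω, p ω * b ω with hεdef
  have hε : 0 < ε := sub_pos.2 (hb p hpΔ)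
  -- main step : pointwise domination with gap ε at the minimizer p
  have main : ∀ ω, b ω + ε ≤ S p ω := by
    intro ω
    set δ : Ω → ℝ := fun ω' => if ω' = ω then 1 else 0 with hδdef
    have hδΔ : δ ∈ Δ := by
      constructor
      · intro x; dsimp [δ]; split <;> norm_num
      · simp [δ]
    set wt : ℝ → Ω → ℝ := fun t ω' => (1 - t) * p ω' + t * δ ω' with hwt
    have hwtΔ : ∀ t, t ∈ Set.Icc (0:ℝ) 1 → wt t ∈ Δ := by
      intro t ht
      constructor
      · intro x
        have := hpΔ.1 x; have := hδΔ.1 x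
        have h1 : (0:ℝ) ≤ 1 - t := by linarith [ht.2]
        have h2 : (0:ℝ) ≤ t := ht.1
        positivity
      · have : ∑ x, wt t x = (1 - t) * (∑ x, p x) + t * (∑ x, δ x) := by
          rw [Finset.mul_sum, Finset.mul_sum, ← Finset.sum_add_distrib]
        rw [this, hpΔ.2, hδΔ.2]; ring
    -- the slope bound for t ∈ (0,1]
    have hψ : ∀ t, t ∈ Set.Ioc (0:ℝ) 1 →
        b ω - (∑ ω', p ω' * b ω') ≤ S (wt t) ω - ∑ ω', p ω' * S (wt t) ω' := by
      intro t ht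
      have hq : wt t ∈ Δ := hwtΔ t ⟨le_of_lt ht.1, ht.2⟩
      have h1 : ∑ ω', p ω' * S (wt t) ω' ≤ ∑ ω', p ω' * S p ω' := hprop p (wt t) hpΔ hq
      have h2 : ε ≤ (∑ ω', wt t ω' * S (wt t) ω') - ∑ ω', wt t ω' * b ω' := hpmin hq
      -- expand the sums over `wt t`
      have exS : ∑ ω', wt t ω' * S (wt t) ω'
          = (1 - t) * (∑ ω', p ω' * S (wt t) ω') + t * S (wt t) ω := by
        rw [Finset.mul_sum]
        have : ∀ ω', wt t ω' * S (wt t) ω'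
            = (1 - t) * (p ω' * S (wt t) ω') + t * (δ ω' * S (wt t) ω') := by
          intro ω'; dsimp [wt]; ring
        rw [Finset.sum_congr rfl fun ω' _ => this ω', Finset.sum_add_distrib]
        congr 1
        rw [← Finset.mul_sum]
        congr 1
        rw [Finset.sum_eq_single_of_mem ω (Finset.mem_univ ω)]
        · simp [δ]
        · intro b _ hb'; simp [δ, hb']
      have exb : ∑ ω', wt t ω' * b ω'
          = (1 - t) * (∑ ω', p ω' * b ω') + t * b ω := by
        have : ∀ ω', wt t ω' * b ω'
            = (1 - t) * (p ω' * b ω') + t * (δ ω' * b ω') := by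
          intro ω'; dsimp [wt]; ring
        rw [Finset.sum_congr rfl fun ω' _ => this ω', Finset.sum_add_distrib,
          ← Finset.mul_sum, ← Finset.mul_sum]
        congr 1
        congr 1
        rw [Finset.sum_eq_single_of_mem ω (Finset.mem_univ ω)]
        · simp [δ]
        · intro b _ hb'; simp [δ, hb']
      rw [exS, exb] at h2
      rw [hεdef] at h2
      have ht0 : 0 < t := ht.1
      nlinarith [h1, h2]
    -- pass to the limit t → 0⁺
    have hwt0 : wt 0 = p := by funext ω'; dsimp [wt]; ring
    have hcontwt : Continuous wt := by
      refine continuous_pi fun ω' => ?_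
      dsimp [wt]
      fun_prop
    have hlim : Tendsto (fun t => S (wt t) ω - ∑ ω', p ω' * S (wt t) ω') (𝓝[>] (0:ℝ))
        (𝓝 (S p ω - ∑ ω', p ω' * S p ω')) := by
      have hc : Continuous fun t => S (wt t) ω - ∑ ω', p ω' * S (wt t) ω' := by
        refine ((hScont ω).comp hcontwt).sub ?_
        exact continuous_finset_sum _ fun ω' _ =>
          continuous_const.mul ((hScont ω').comp hcontwt)
      have h0 : Tendsto (fun t => S (wt t) ω - ∑ ω', p ω' * S (wt t) ω') (𝓝[>] (0:ℝ))
          (𝓝 (S (wt 0) ω - ∑ ω', p ω' * S (wt 0) ω')) :=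
        (hc.tendsto 0).mono_left nhdsWithin_le_nhds
      rw [hwt0] at h0; exact h0
    have hIoc : Set.Ioc (0:ℝ) 1 ∈ 𝓝[>] (0:ℝ) := Ioc_mem_nhdsGT_of_mem ⟨le_refl _, zero_lt_one⟩
    have hge : b ω - (∑ ω', p ω' * b ω') ≤ S p ω - ∑ ω', p ω' * S p ω' :=
      ge_of_tendsto hlim (Filter.eventually_of_mem hIoc fun t ht => hψ t ht)
    have hεeq : ε = (∑ ω', p ω' * S p ω') - ∑ ω', p ω' * b ω' := hεdef
    linarith
  -- perturb p to an interior point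
  set u : Ω → ℝ := fun _ => (Fintype.card Ω : ℝ)⁻¹ with hu
  have hupos : ∀ ω', 0 < u ω' := fun ω' => by
    dsimp [u]; positivity
  set vt : ℝ → Ω → ℝ := fun t ω' => (1 - t) * p ω' + t * u ω' with hvt
  have hvtΔ : ∀ t, t ∈ Set.Ioc (0:ℝ) 1 → vt t ∈ Δ := by
    intro t ht
    constructor
    · intro x
      have := hpΔ.1 x; have h3 := hupos x
      have h1 : (0:ℝ) ≤ 1 - t := by linarith [ht.2]
      have h2 : (0:ℝ) ≤ t := le_of_lt ht.1
      positivity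
    · have : ∑ x, vt t x = (1 - t) * (∑ x, p x) + t * (∑ x, u x) := by
        rw [Finset.mul_sum, Finset.mul_sum, ← Finset.sum_add_distrib]
      rw [this, hpΔ.2, hunif.2]; ring
  have hvtpos : ∀ t, t ∈ Set.Ioc (0:ℝ) 1 → ∀ ω', 0 < vt t ω' := by
    intro t ht ω'
    have h1 : (0:ℝ) ≤ (1 - t) * p ω' := by
      have := hpΔ.1 ω'; have : (0:ℝ) ≤ 1 - t := by linarith [ht.2]
      positivity
    have h2 : 0 < t * u ω' := mul_pos ht.1 (hupos ω')
    dsimp [vt]; linarith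
  have hvt0 : vt 0 = p := by funext ω'; dsimp [vt]; ring
  have hcontvt : Continuous vt := by
    refine continuous_pi fun ω' => ?_
    dsimp [vt]; fun_prop
  have hev : ∀ᶠ t in 𝓝[>] (0:ℝ), ∀ ω, b ω < S (vt t) ω := by
    rw [eventually_all]
    intro ω
    have hlim : Tendsto (fun t => S (vt t) ω) (𝓝[>] (0:ℝ)) (𝓝 (S p ω)) := by
      have h0 : Tendsto (fun t => S (vt t) ω) (𝓝[>] (0:ℝ)) (𝓝 (S (vt 0) ω)) :=
        ((((hScont ω).comp hcontvt)).tendsto 0).mono_left nhdsWithin_le_nhds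
      rw [hvt0] at h0; exact h0
    have : b ω < S p ω := lt_of_lt_of_le (by linarith [main ω]) (main ω)
    exact hlim.eventually (eventually_gt_nhds this)
  have hIoc : Set.Ioc (0:ℝ) 1 ∈ 𝓝[>] (0:ℝ) := Ioc_mem_nhdsGT_of_mem ⟨le_refl _, zero_lt_one⟩
  obtain ⟨t, ht1, ht2⟩ := (hev.and (Filter.eventually_of_mem hIoc fun t ht => ht)).exists
  exact ⟨vt t, hvtΔ t ht2, hvtpos t ht2, ht1⟩

/-- Choosing a sufficiently negative real substitute for `-∞` values. -/
theorem chooseK {Ω : Type*} [Fintype Ω] [Nonempty Ω]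
    (V : (Ω → ℝ) → ℝ) (hV : Continuous V)
    (b' : Ω → ℝ) (F : Ω → Prop) [DecidablePred F]
    (hb'F : ∀ ω, F ω → b' ω = 0)
    (h : ∀ w ∈ stdSimplex ℝ Ω, (∀ ω, F ω → w ω = 0) → ∑ ω, w ω * b' ω < V w) :
    ∃ bt : Ω → ℝ, (∀ ω, ¬ F ω → bt ω = b' ω) ∧
      ∀ w ∈ stdSimplex ℝ Ω, ∑ ω, w ω * bt ω < V w := by
  classical
  set Δ := stdSimplex ℝ Ω with hΔ
  have hΔc : IsCompact Δ := isCompact_stdSimplex ℝ Ω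
  have hunif : (fun _ : Ω => (Fintype.card Ω : ℝ)⁻¹) ∈ Δ := uniform_mem_stdSimplex Ω
  set W : (Ω → ℝ) → ℝ := fun w => V w - ∑ ω, w ω * b' ω with hW
  have hWcont : Continuous W :=
    hV.sub (continuous_finset_sum _ fun ω _ => (continuous_apply ω).mul continuous_const)
  set wF : (Ω → ℝ) → ℝ := fun w => ∑ ω, if F ω then w ω else 0 with hwF
  have hwFcont : Continuous wF := by
    refine continuous_finset_sum _ fun ω _ => ?_
    by_cases hω : F ω
    · have : (fun w : Ω → ℝ => if F ω then w ω else 0) = fun w => w ω := by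
        funext w; rw [if_pos hω]
      rw [this]; exact continuous_apply ω
    · have : (fun w : Ω → ℝ => if F ω then w ω else 0) = fun _ => (0:ℝ) := by
        funext w; rw [if_neg hω]
      rw [this]; exact continuous_const
  have hwFnonneg : ∀ w ∈ Δ, 0 ≤ wF w := by
    intro w hw
    refine Finset.sum_nonneg fun ω _ => ?_
    split
    · exact hw.1 ω
    · exact le_refl 0
  have hwF0 : ∀ w ∈ Δ, wF w = 0 → ∀ ω, F ω → w ω = 0 := by
    intro w hw h0 ω hF
    have := (Finset.sum_eq_zero_iff_of_nonneg (fun ω _ => by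
      split
      · exact hw.1 ω
      · exact le_refl 0)).1 h0 ω (Finset.mem_univ ω)
    rwa [if_pos hF] at this
  by_cases hC : (Δ ∩ {w | W w ≤ 0}).Nonempty
  · have hCc : IsCompact (Δ ∩ {w | W w ≤ 0}) :=
      hΔc.inter_right (isClosed_le hWcont continuous_const)
    obtain ⟨w₀, hw₀, hw₀min⟩ := hCc.exists_isMinOn hC hwFcont.continuousOn
    have hδ0 : 0 < wF w₀ := by
      rcases eq_or_lt_of_le (hwFnonneg w₀ hw₀.1) with heq | hlt
      · exfalso
        have hlt' := h w₀ hw₀.1 (hwF0 w₀ hw₀.1 heq.symm)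
        have : 0 < W w₀ := sub_pos.2 hlt'
        exact absurd hw₀.2 (not_le.2 this)
      · exact hlt
    obtain ⟨w₁, hw₁Δ, hw₁min⟩ := hΔc.exists_isMinOn ⟨_, hunif⟩ hWcont.continuousOn
    set m := W w₁ with hm
    set K := min 0 ((m - 1) / wF w₀) with hK
    refine ⟨fun ω => if F ω then K else b' ω, fun ω hω => if_neg hω, ?_⟩
    intro w hw
    have hsum : ∑ ω, w ω * (if F ω then K else b' ω) = (∑ ω, w ω * b' ω) + K * wF w := by
      rw [hwF, Finset.mul_sum, ← Finset.sum_add_distrib]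
      refine Finset.sum_congr rfl fun ω _ => ?_
      by_cases hω : F ω
      · rw [if_pos hω, if_pos hω, hb'F ω hω]; ring
      · rw [if_neg hω, if_neg hω]; ring
    rw [hsum]
    have hK0 : K ≤ 0 := min_le_left _ _
    by_cases hWw : 0 < W w
    · have : K * wF w ≤ 0 := mul_nonpos_of_nonpos_of_nonneg hK0 (hwFnonneg w hw)
      have : K * wF w < W w := lt_of_le_of_lt this hWw
      rw [hW] at this; simp only at this; linarith
    · push_neg at hWw
      have hwC : w ∈ Δ ∩ {w | W w ≤ 0} := ⟨hw, hWw⟩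
      have h1 : wF w₀ ≤ wF w := hw₀min hwC
      have h2 : m ≤ W w := hw₁min hw
      have h3 : K ≤ (m - 1) / wF w₀ := min_le_right _ _
      have h4 : (m - 1) / wF w₀ * wF w₀ = m - 1 := div_mul_cancel₀ _ (ne_of_gt hδ0)
      have h5 : m - 1 < 0 := by linarith
      have h6 : (m - 1) / wF w₀ < 0 := div_neg_of_neg_of_pos h5 hδ0
      have hA : K * wF w ≤ (m - 1) / wF w₀ * wF w :=
        mul_le_mul_of_nonneg_right h3 (le_trans hδ0.le h1)
      have hB : (m - 1) / wF w₀ * wF w ≤ (m - 1) / wF w₀ * wF w₀ :=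
        mul_le_mul_of_nonpos_left h1 h6.le
      have hKwF : K * wF w ≤ m - 1 := le_trans hA (le_trans hB (le_of_eq h4))
      have : K * wF w < W w := by linarith
      rw [hW] at this; simp only at this; linarith
  · refine ⟨b', fun ω _ => rfl, ?_⟩
    intro w hw
    have : w ∉ {w | W w ≤ 0} := fun hmem => hC ⟨w, hw, hmem⟩
    have : 0 < W w := not_le.1 this
    rw [hW] at this; simp only at this; linarith

theorem stmt14 [Fintype Ω] [Nonempty Ω] (M : ℝ)
    (s : (Set Ω → ℝ) → Ω → EReal)
    (hbound : ∀ c ω, s c ω ≤ (M : EReal))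
    (hfin : ∀ c, FiniteScore (s c))
    -- continuity w.r.t. pointwise convergence on `𝒞` and the product of the
    -- order topology on `[-∞,M]^Ω`
    (hcont : Continuous s)
    (hstrict : ∀ p c, IsProbability p → c ≠ p →
      expScore p (s c) < expScore p (s p))
    (α : EReal) (hαM : α ≤ (M : EReal))
    (hα : ∀ p, IsProbability p → ∀ ω, α ≤ s p ω)
    (sα : (Set Ω → ℝ) → Ω → EReal)
    -- s_α(c) = s(c) if c ∉ 𝒫
    (hsα₁ : ∀ c, ¬ IsProbability c → sα c = s c)
    -- s_α(c) = s(c) if c ∈ ℛ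
    (hsα₂ : ∀ p, IsProbability p → (∀ ω, 0 < p {ω}) → sα p = s p)
    -- for p ∈ 𝒫 \ ℛ: s_α(p)(ω) = s(p)(ω) if p({ω}) > 0, and = α if p({ω}) = 0
    (hsα₃ : ∀ p, IsProbability p → ¬ (∀ ω, 0 < p {ω}) → ∀ ω,
      (0 < p {ω} → sα p ω = s p ω) ∧ (p {ω} = 0 → sα p ω = α)) :
    ∀ sα' : (Set Ω → ℝ) → Ω → EReal,
      (∀ c ω, sα' c ω ≤ (M : EReal)) →
      (∀ p, IsProbability p → sα' p = sα p) →
      (∀ p c, IsProbability p → expScore p (sα' c) ≤ expScore p (sα' p)) →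
      (∀ p c, IsProbability p → ¬ IsProbability c →
        expScore p (sα' c) < expScore p (sα' p)) →
      ∀ c, ¬ IsProbability c →
        ∃ p, IsProbability p ∧ (∀ ω, 0 < p {ω}) ∧
          ∀ ω, sα' c ω < sα p ω := by
  classical
  intro sα' hM' hagree _hquasi hqstrict c hc
  set Δ := stdSimplex ℝ Ω with hΔdef
  -- the real-valued version of `s` via the simplex parametrization
  set S : (Ω → ℝ) → Ω → ℝ := fun w ω => (s (Pfun w) ω).toReal with hSdef
  have hScoe : ∀ w ω, ((S w ω : ℝ) : EReal) = s (Pfun w) ω := fun w ω =>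
    EReal.coe_toReal (hfin (Pfun w) ω).2 (hfin (Pfun w) ω).1
  have hScont : ∀ ω, Continuous fun w => S w ω := by
    intro ω
    rw [continuous_iff_continuousAt]
    intro w
    have h1 : Continuous fun w => s (Pfun w) ω :=
      (continuous_apply ω).comp (hcont.comp continuous_Pfun)
    exact (EReal.tendsto_toReal (hfin (Pfun w) ω).2 (hfin (Pfun w) ω).1).comp h1.continuousAt
  have hVcont : Continuous fun w : Ω → ℝ => ∑ ω, w ω * S w ω :=
    continuous_finset_sum _ fun ω _ => (continuous_apply ω).mul (hScont ω)
  -- expected-score casts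
  have hexp : ∀ (w v : Ω → ℝ),
      expScore (Pfun w) (s (Pfun v)) = ((∑ ω, w ω * S v ω : ℝ) : EReal) := by
    intro w v
    rw [expScore_Pfun, ereal_coe_sum]
    exact Finset.sum_congr rfl fun ω _ => by rw [EReal.coe_mul, hScoe]
  -- propriety, in real terms
  have hprop : ∀ w v, w ∈ Δ → v ∈ Δ →
      ∑ ω, w ω * S v ω ≤ ∑ ω, w ω * S w ω := by
    intro w v hw hv
    by_cases hvw : Pfun v = Pfun w
    · have : ∀ ω, S v ω = S w ω := fun ω => by rw [hSdef]; simp only [hvw]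
      exact le_of_eq (Finset.sum_congr rfl fun ω _ => by rw [this])
    · have h1 := hstrict (Pfun w) (Pfun v) (isProbability_Pfun hw) hvw
      rw [hexp w v, hexp w w] at h1
      exact_mod_cast h1.le
  -- opponent's score
  have hβne_top : ∀ ω, sα' c ω ≠ ⊤ := fun ω => ((hM' c ω).trans_lt (EReal.coe_lt_top M)).ne
  set b' : Ω → ℝ := fun ω => (sα' c ω).toReal with hb'def
  have hβcoe : ∀ ω, sα' c ω ≠ ⊥ → sα' c ω = ((b' ω : ℝ) : EReal) := fun ω h =>
    (EReal.coe_toReal (hβne_top ω) h).symm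
  have hb'F : ∀ ω, sα' c ω = ⊥ → b' ω = 0 := by
    intro ω h; rw [hb'def]; simp only [h]; rfl
  -- the quasi-strict propriety hypothesis on the face where the -∞'s get no weight
  have hface : ∀ w ∈ Δ, (∀ ω, sα' c ω = ⊥ → w ω = 0) →
      ∑ ω, w ω * b' ω < ∑ ω, w ω * S w ω := by
    intro w hw h0
    have hP := isProbability_Pfun hw
    have h1 := hqstrict (Pfun w) c hP hc
    rw [hagree (Pfun w) hP] at h1
    have hR : expScore (Pfun w) (sα (Pfun w)) = ((∑ ω, w ω * S w ω : ℝ) : EReal) := by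
      rw [expScore_Pfun, ereal_coe_sum]
      refine Finset.sum_congr rfl fun ω _ => ?_
      rcases eq_or_lt_of_le (hw.1 ω) with h | h
      · rw [← h]; simp
      · have hsαs : sα (Pfun w) ω = s (Pfun w) ω := by
          by_cases hreg : ∀ ω', 0 < Pfun w {ω'}
          · rw [hsα₂ (Pfun w) hP hreg]
          · exact (hsα₃ (Pfun w) hP hreg ω).1 (by rw [Pfun_singleton]; exact h)
        rw [hsαs, EReal.coe_mul, hScoe]
    have hL : expScore (Pfun w) (sα' c) = ((∑ ω, w ω * b' ω : ℝ) : EReal) := by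
      rw [expScore_Pfun, ereal_coe_sum]
      refine Finset.sum_congr rfl fun ω _ => ?_
      by_cases hbot : sα' c ω = ⊥
      · rw [h0 ω hbot, hbot]; simp
      · rw [hβcoe ω hbot, EReal.coe_mul]
    rw [hR, hL] at h1
    exact_mod_cast h1
  -- replace the -∞ coordinates by a sufficiently negative real
  obtain ⟨bt, hbt, hblt⟩ := chooseK (fun w => ∑ ω, w ω * S w ω) hVcont b'
    (fun ω => sα' c ω = ⊥) hb'F hface
  -- apply the core domination lemma
  obtain ⟨w, hwΔ, hwpos, hdom⟩ := key_dom S hScont hprop bt hblt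
  have hwreg : ∀ ω, 0 < Pfun w {ω} := fun ω => by rw [Pfun_singleton]; exact hwpos ω
  refine ⟨Pfun w, isProbability_Pfun hwΔ, hwreg, ?_⟩
  intro ω
  rw [hsα₂ (Pfun w) (isProbability_Pfun hwΔ) hwreg, ← hScoe w ω]
  by_cases hbot : sα' c ω = ⊥
  · rw [hbot]; exact EReal.bot_lt_coe _
  · rw [hβcoe ω hbot]
    have : b' ω < S w ω := by rw [← hbt ω hbot]; exact hdom ω
    exact_mod_cast this
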